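/- arXiv:1402.2358 — 5 statements merged into one kernel-verified Lean document; each statement's English description precedes it below -/
import Mathlib

section
/- For every nonnegative integer n, c_n/n! = ∫₀¹ dt / (t (−ln t) ((ln(−ln t))² + π²) (1 − ln t)^n). -/
/-!
For `0 < x < 1`, the beta integral and Euler's reflection formula give
`(x)ₙ / n! = (sin πx / π) ∫₀¹ y^(-x) (1 - y)^(n + x - 1) dy`. Integrating over `x` and
exchanging the integrals (the integrand is nonnegative), the inner `x`-integral is elementary,
`∫₀¹ e^(ax) sin πx dx = π (eᵃ + 1) / (a² + π²)` with `a = log ((1 - y) / y)`, and leaves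
`∫₀¹ (1 - y)ⁿ / (y (1 - y) (log² (y / (1 - y)) + π²)) dy`; the substitution
`t = exp (-y / (1 - y))` turns this into the stated integral.
-/

open MeasureTheory Real Nat

noncomputable def cauchy2 (n : ℕ) : ℝ :=
  ∫ x in (0:ℝ)..1, ∏ i ∈ Finset.range n, (x + i)

open Set

theorem Complex.ofReal_rpow_mul_one_sub_rpow {u v y : ℝ} (hy : y ∈ Icc (0:ℝ) 1) :
    ((y ^ (u - 1) * (1 - y) ^ (v - 1) : ℝ) : ℂ) =
      (y : ℂ) ^ ((u : ℂ) - 1) * (1 - (y : ℂ)) ^ ((v : ℂ) - 1) := by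
  rw [Complex.ofReal_mul, Complex.ofReal_cpow hy.1, Complex.ofReal_cpow (sub_nonneg.2 hy.2)]
  push_cast
  rfl

theorem Real.intervalIntegrable_rpow_mul_one_sub_rpow {u v : ℝ} (hu : 0 < u) (hv : 0 < v) :
    IntervalIntegrable (fun y : ℝ => y ^ (u - 1) * (1 - y) ^ (v - 1)) volume 0 1 := by
  have hc := Complex.betaIntegral_convergent (u := u) (v := v) (by simpa) (by simpa)
  rw [intervalIntegrable_iff_integrableOn_Icc_of_le zero_le_one] at hc ⊢
  refine IntegrableOn.congr_fun hc.re (fun y hy => ?_) measurableSet_Icc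
  simp [← Complex.ofReal_rpow_mul_one_sub_rpow hy]

theorem Real.integral_rpow_mul_one_sub_rpow {u v : ℝ} (hu : 0 < u) (hv : 0 < v) :
    ∫ y in (0:ℝ)..1, y ^ (u - 1) * (1 - y) ^ (v - 1) = Gamma u * Gamma v / Gamma (u + v) := by
  have h := Complex.betaIntegral_eq_Gamma_mul_div u v (by simpa) (by simpa)
  rw [Complex.betaIntegral, ← intervalIntegral.integral_congr
    (fun y hy => Complex.ofReal_rpow_mul_one_sub_rpow (u := u) (v := v)
      (by rwa [uIcc_of_le zero_le_one] at hy)), intervalIntegral.integral_ofReal] at h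
  rw [← Complex.ofReal_add, Complex.Gamma_ofReal, Complex.Gamma_ofReal, Complex.Gamma_ofReal] at h
  exact_mod_cast h

theorem Real.Gamma_add_nat_eq_prod_mul_Gamma (n : ℕ) {z : ℝ} (hz : ∀ k : ℕ, z ≠ -k) :
    Gamma (z + n) = (∏ i ∈ Finset.range n, (z + i)) * Gamma z := by
  induction n with
  | zero => simp
  | succ m ih =>
    have hzm : z + m ≠ 0 := fun h => hz m (by linarith)
    rw [Nat.cast_succ, ← add_assoc, Real.Gamma_add_one hzm, ih, Finset.prod_range_succ]
    ring

theorem prod_add_div_factorial_eq_sin_mul_integral (n : ℕ) {x : ℝ} (hx₀ : 0 < x)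
    (hx₁ : x < 1) :
    (∏ i ∈ Finset.range n, (x + i)) / n ! =
      sin (π * x) / π * ∫ y in (0:ℝ)..1, y ^ (-x) * (1 - y) ^ (n + x - 1) := by
  have hbeta := Real.integral_rpow_mul_one_sub_rpow (u := 1 - x) (v := n + x) (by linarith)
    (by positivity)
  rw [sub_sub_cancel_left, show 1 - x + (n + x) = n + 1 by ring] at hbeta
  have hprod := Real.Gamma_add_nat_eq_prod_mul_Gamma n (z := x)
    (fun k h => by linarith [h ▸ hx₀, k.cast_nonneg (α := ℝ)])
  have hsin : sin (π * x) ≠ 0 :=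
    (sin_pos_of_pos_of_lt_pi (by positivity) (by nlinarith [pi_pos])).ne'
  have hGamma : Gamma (1 - x) * Gamma (x + n) =
      (∏ i ∈ Finset.range n, (x + i)) * (π / sin (π * x)) := by
    rw [hprod, ← Gamma_mul_Gamma_one_sub]
    ring
  rw [hbeta, add_comm (n : ℝ), hGamma, Real.Gamma_nat_eq_factorial]
  field_simp
  rw [mul_comm x π, div_self hsin]

theorem integral_exp_mul_mul_sin_pi_mul (a : ℝ) :
    ∫ x in (0:ℝ)..1, exp (a * x) * sin (π * x) = π * (exp a + 1) / (a ^ 2 + π ^ 2) := by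
  have hD : a ^ 2 + π ^ 2 ≠ 0 := by positivity
  have hderiv (x : ℝ) : HasDerivAt
      (fun x => exp (a * x) * (a * sin (π * x) - π * cos (π * x)) / (a ^ 2 + π ^ 2))
      (exp (a * x) * sin (π * x)) x := by
    have hlin (c : ℝ) : HasDerivAt (fun x : ℝ => c * x) c x := by
      simpa using (hasDerivAt_id x).const_mul c
    have h := (((hlin a).exp.mul (((hlin π).sin.const_mul a).sub
      ((hlin π).cos.const_mul π))).div_const (a ^ 2 + π ^ 2))
    refine h.congr_deriv ?_
    simp only [Pi.sub_apply]
    field_simp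
    ring
  rw [intervalIntegral.integral_eq_sub_of_hasDerivAt (fun x _ => hderiv x)
    (by apply Continuous.intervalIntegrable; fun_prop)]
  simp only [mul_one, mul_zero, sin_pi, cos_pi, sin_zero, cos_zero, exp_zero]
  field_simp
  ring

theorem hasDerivAt_exp_neg_div_one_sub {y : ℝ} (hy : y ≠ 1) :
    HasDerivAt (fun y => exp (-(y / (1 - y)))) (-(exp (-(y / (1 - y))) / (1 - y) ^ 2)) y := by
  have h1y : 1 - y ≠ 0 := sub_ne_zero.2 hy.symm
  have h := (((hasDerivAt_id y).div ((hasDerivAt_const y 1).sub (hasDerivAt_id y)) h1y).neg).exp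
  refine h.congr_deriv ?_
  simp only [Pi.neg_apply, Pi.div_apply, Pi.sub_apply, id_eq]
  field_simp
  ring

theorem injOn_exp_neg_div_one_sub : InjOn (fun y => exp (-(y / (1 - y)))) (Iio 1) := by
  intro a ha b hb hab
  have h1a : 1 - a ≠ 0 := by linarith [mem_Iio.1 ha]
  have h1b : 1 - b ≠ 0 := by linarith [mem_Iio.1 hb]
  have h := exp_injective hab
  field_simp at h
  linarith

theorem image_exp_neg_div_one_sub_Ioo :
    (fun y => exp (-(y / (1 - y)))) '' Ioo 0 1 = Ioo 0 1 := by
  ext t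
  constructor
  · rintro ⟨y, ⟨hy₀, hy₁⟩, rfl⟩
    have : 0 < y / (1 - y) := div_pos hy₀ (by linarith)
    exact ⟨exp_pos _, exp_lt_one_iff.2 (by linarith)⟩
  · rintro ⟨ht₀, ht₁⟩
    have hlog : log t < 0 := log_neg ht₀ ht₁
    refine ⟨-log t / (1 - log t),
      ⟨div_pos (by linarith) (by linarith), (div_lt_one (by linarith)).2 (by linarith)⟩, ?_⟩
    have h1 : 1 - log t ≠ 0 := by linarith
    have : -log t / (1 - log t) / (1 - -log t / (1 - log t)) = -log t := by
      field_simp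
      ring
    simp only [this, neg_neg, exp_log ht₀]

theorem setIntegral_Ioo_eq_setIntegral_comp_exp_neg_div_one_sub {E : Type*}
    [NormedAddCommGroup E] [NormedSpace ℝ E] (g : ℝ → E) :
    ∫ t in Ioo (0:ℝ) 1, g t =
      ∫ y in Ioo (0:ℝ) 1,
        (exp (-(y / (1 - y))) / (1 - y) ^ 2) • g (exp (-(y / (1 - y)))) := by
  conv_lhs => rw [← image_exp_neg_div_one_sub_Ioo]
  rw [integral_image_eq_integral_abs_deriv_smul measurableSet_Ioo
    (fun y hy => (hasDerivAt_exp_neg_div_one_sub hy.2.ne).hasDerivWithinAt)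
    (injOn_exp_neg_div_one_sub.mono fun y hy => hy.2)]
  refine setIntegral_congr_fun measurableSet_Ioo fun y _ => ?_
  rw [abs_neg, abs_of_nonneg (by positivity : 0 ≤ exp (-(y / (1 - y))) / (1 - y) ^ 2)]

noncomputable def cauchyKernel (n : ℕ) (x y : ℝ) : ℝ :=
  sin (π * x) / π * (y ^ (-x) * (1 - y) ^ ((n : ℝ) + x - 1))

theorem cauchyKernel_nonneg (n : ℕ) {x y : ℝ} (hx : x ∈ Icc (0:ℝ) 1)
    (hy : y ∈ Icc (0:ℝ) 1) :
    0 ≤ cauchyKernel n x y := by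
  have hsin : 0 ≤ sin (π * x) :=
    sin_nonneg_of_nonneg_of_le_pi (by nlinarith [pi_pos, hx.1]) (by nlinarith [pi_pos, hx.2])
  exact mul_nonneg (div_nonneg hsin pi_pos.le)
    (mul_nonneg (rpow_nonneg hy.1 _) (rpow_nonneg (sub_nonneg.2 hy.2) _))

theorem integrableOn_cauchyKernel (n : ℕ) {x : ℝ} (hx : x ∈ Ioo (0:ℝ) 1) :
    IntegrableOn (cauchyKernel n x) (Ioo 0 1) := by
  have h := (Real.intervalIntegrable_rpow_mul_one_sub_rpow (u := 1 - x) (v := n + x)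
    (by linarith [hx.2]) (by linarith [hx.1, n.cast_nonneg (α := ℝ)])).1
  rw [sub_sub_cancel_left] at h
  exact (h.mono_set Ioo_subset_Ioc_self).const_mul _

theorem setIntegral_cauchyKernel_right (n : ℕ) {x : ℝ} (hx : x ∈ Ioo (0:ℝ) 1) :
    ∫ y in Ioo 0 1, cauchyKernel n x y = (∏ i ∈ Finset.range n, (x + i)) / n ! := by
  rw [prod_add_div_factorial_eq_sin_mul_integral n hx.1 hx.2,
    intervalIntegral.integral_of_le zero_le_one, integral_Ioc_eq_integral_Ioo,
    ← integral_const_mul]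
  rfl

theorem setIntegral_cauchyKernel_left (n : ℕ) {y : ℝ} (hy : y ∈ Ioo (0:ℝ) 1) :
    ∫ x in Ioo 0 1, cauchyKernel n x y =
      (1 - y) ^ n / (y * (1 - y) * (log (y / (1 - y)) ^ 2 + π ^ 2)) := by
  obtain ⟨hy₀, hy₁⟩ := hy
  have h1y : 0 < 1 - y := by linarith
  have hkernel (x : ℝ) : cauchyKernel n x y =
      (1 - y) ^ n / (π * (1 - y)) * (exp (log ((1 - y) / y) * x) * sin (π * x)) := by
    rw [cauchyKernel, ← rpow_def_of_pos (by positivity), div_rpow h1y.le hy₀.le,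
      rpow_neg hy₀.le, rpow_sub_one h1y.ne', rpow_add h1y, rpow_natCast]
    field_simp
  have hexp : exp (log ((1 - y) / y)) = (1 - y) / y := exp_log (by positivity)
  have hlog : log (y / (1 - y)) ^ 2 = log ((1 - y) / y) ^ 2 := by
    rw [← inv_div, log_inv, neg_sq]
  rw [setIntegral_congr_fun measurableSet_Ioo fun x _ => hkernel x, integral_const_mul,
    ← integral_Ioc_eq_integral_Ioo, ← intervalIntegral.integral_of_le zero_le_one,
    integral_exp_mul_mul_sin_pi_mul, hexp, hlog]
  field_simp
  ring

theorem integrable_uncurry_cauchyKernel (n : ℕ) :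
    Integrable (Function.uncurry (cauchyKernel n))
      ((volume.restrict (Ioo (0:ℝ) 1)).prod (volume.restrict (Ioo (0:ℝ) 1))) := by
  have hmeas : Measurable (Function.uncurry (cauchyKernel n)) := by
    unfold cauchyKernel Function.uncurry
    fun_prop
  rw [integrable_prod_iff hmeas.aestronglyMeasurable]
  constructor
  · exact (ae_restrict_iff' measurableSet_Ioo).2
      (ae_of_all _ fun x hx => integrableOn_cauchyKernel n hx)
  · have hnorm : ∀ x ∈ Ioo (0:ℝ) 1,
        ∫ y in Ioo 0 1, ‖cauchyKernel n x y‖ = (∏ i ∈ Finset.range n, (x + i)) / n ! := by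
      intro x hx
      rw [← setIntegral_cauchyKernel_right n hx]
      refine setIntegral_congr_fun measurableSet_Ioo fun y hy => ?_
      exact norm_of_nonneg
        (cauchyKernel_nonneg n (Ioo_subset_Icc_self hx) (Ioo_subset_Icc_self hy))
    have hcont : Continuous fun x : ℝ => (∏ i ∈ Finset.range n, (x + i)) / n ! := by fun_prop
    refine ((hcont.integrableOn_Icc (a := 0) (b := 1)).mono_set Ioo_subset_Icc_self).congr ?_
    exact (ae_restrict_iff' measurableSet_Ioo).2 (ae_of_all _ fun x hx => (hnorm x hx).symm)

theorem cauchy2_div_factorial_integral (n : ℕ) :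
    cauchy2 n / (n ! : ℝ) =
      ∫ t in Set.Ioo (0:ℝ) 1,
        1 / (t * (-Real.log t) * ((Real.log (-Real.log t)) ^ 2 + π ^ 2)
              * (1 - Real.log t) ^ n) := by
  calc cauchy2 n / (n ! : ℝ)
      = ∫ x in Ioo 0 1, ∫ y in Ioo 0 1, cauchyKernel n x y := by
        rw [cauchy2, intervalIntegral.integral_of_le zero_le_one, integral_Ioc_eq_integral_Ioo,
          ← integral_div]
        exact setIntegral_congr_fun measurableSet_Ioo fun x hx =>
          (setIntegral_cauchyKernel_right n hx).symm
    _ = ∫ y in Ioo 0 1, ∫ x in Ioo 0 1, cauchyKernel n x y :=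
        integral_integral_swap (integrable_uncurry_cauchyKernel n)
    _ = ∫ y in Ioo 0 1, (1 - y) ^ n / (y * (1 - y) * (Real.log (y / (1 - y)) ^ 2 + π ^ 2)) :=
        setIntegral_congr_fun measurableSet_Ioo fun y hy => setIntegral_cauchyKernel_left n hy
    _ = _ := by
        conv_rhs => rw [setIntegral_Ioo_eq_setIntegral_comp_exp_neg_div_one_sub]
        refine setIntegral_congr_fun measurableSet_Ioo fun y ⟨hy₀, hy₁⟩ => ?_
        have h1y : 0 < 1 - y := by linarith
        have hone : 1 - -(y / (1 - y)) = 1 / (1 - y) := by field_simp; ring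
        rw [smul_eq_mul, log_exp, neg_neg, hone, one_div_pow]
        field_simp
end

section
/- Let m ≥ 1 and let n, a_1, …, a_m be nonnegative integers. Then the m×m determinant det[(−1)^{a_i+a_j} c_{n+a_i+a_j}] is nonnegative. -/
/-!
For `x > 0` the rising factorial is a Gamma moment,
`x (x+1) ⋯ (x+N-1) = Γ(x)⁻¹ ∫₀^∞ t^N e^{-t} t^{x-1} dt`, so the matrix
`(-1)^{a_i+a_j} x (x+1) ⋯ (x+n+a_i+a_j-1)` is the Gram matrix of the functions `(-t)^{a_i}`
with respect to the positive weight `t^n e^{-t} t^{x-1}`, hence positive semidefinite.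
Integrating over `x ∈ (0, 1]` preserves positive semidefiniteness, and a positive semidefinite
matrix has nonnegative determinant.
-/

open MeasureTheory Real Nat

open Set Matrix

theorem Matrix.posSemidef_of_integral {ι α : Type*} [Fintype ι] [MeasurableSpace α]
    {μ : Measure α} {M : α → Matrix ι ι ℝ} (hint : ∀ i j, Integrable (fun x => M x i j) μ)
    (hM : ∀ᵐ x ∂μ, (M x).PosSemidef) :
    (of fun i j => ∫ x, M x i j ∂μ).PosSemidef := by
  have quad (A : Matrix ι ι ℝ) (v : ι → ℝ) :
      star v ⬝ᵥ (A *ᵥ v) = ∑ i, ∑ j, v i * A i j * v j := by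
    simp only [dotProduct, mulVec, star_trivial, Finset.mul_sum, mul_assoc]
  refine .of_dotProduct_mulVec_nonneg ?_ fun v => ?_
  · ext i j
    refine integral_congr_ae (hM.mono fun x hx => ?_)
    simpa using hx.1.apply i j
  · have hint' (i j) : Integrable (fun x => v i * M x i j * v j) μ :=
      ((hint i j).const_mul _).mul_const _
    calc (0 : ℝ) ≤ ∫ x, star v ⬝ᵥ (M x *ᵥ v) ∂μ :=
          integral_nonneg_of_ae (hM.mono fun x hx => hx.dotProduct_mulVec_nonneg v)
      _ = star v ⬝ᵥ ((of fun i j => ∫ x, M x i j ∂μ) *ᵥ v) := by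
          simp only [quad, of_apply]
          rw [integral_finsetSum _ fun i _ => integrable_finsetSum _ fun j _ => hint' i j]
          simp only [integral_finsetSum _ fun j _ => hint' _ j, integral_mul_const,
            integral_const_mul]

theorem Real.Gamma_add_nat_eq_prod_mul {x : ℝ} (hx : 0 < x) (N : ℕ) :
    Gamma (x + N) = (∏ k ∈ Finset.range N, (x + k)) * Gamma x := by
  induction N with
  | zero => simp
  | succ N ih =>
    rw [Nat.cast_succ, ← add_assoc, Gamma_add_one (by positivity), ih, Finset.prod_range_succ]
    ring

theorem Real.GammaIntegrand_add_nat {x t : ℝ} (ht : t ≠ 0) (N : ℕ) :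
    exp (-t) * t ^ (x + N - 1) = t ^ N * (exp (-t) * t ^ (x - 1)) := by
  rw [add_sub_right_comm, rpow_add_natCast ht]
  ring

theorem Real.integrableOn_pow_mul_GammaIntegrand {x : ℝ} (hx : 0 < x) (N : ℕ) :
    IntegrableOn (fun t => t ^ N * (exp (-t) * t ^ (x - 1))) (Ioi 0) :=
  (GammaIntegral_convergent (by positivity : 0 < x + N)).congr_fun
    (fun _ ht => GammaIntegrand_add_nat (ne_of_gt ht) N) measurableSet_Ioi

theorem Real.prod_mul_Gamma_eq_integral {x : ℝ} (hx : 0 < x) (N : ℕ) :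
    (∏ k ∈ Finset.range N, (x + k)) * Gamma x
      = ∫ t in Ioi 0, t ^ N * (exp (-t) * t ^ (x - 1)) := by
  rw [← Gamma_add_nat_eq_prod_mul hx, Gamma_eq_integral (by positivity)]
  exact setIntegral_congr_fun measurableSet_Ioi fun _ ht => GammaIntegrand_add_nat (ne_of_gt ht) N

theorem posSemidef_signed_risingFactorial {ι : Type*} [Fintype ι] {x : ℝ} (hx : 0 < x) (n : ℕ)
    (a : ι → ℕ) :
    (of fun i j =>
      (-1 : ℝ) ^ (a i + a j) * ∏ k ∈ Finset.range (n + a i + a j), (x + k)).PosSemidef := by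
  set w : ℝ → ℝ := fun t => t ^ n * (exp (-t) * t ^ (x - 1))
  set M : ℝ → Matrix ι ι ℝ :=
    fun t => w t • vecMulVec (fun i => (-t) ^ a i) (fun i => (-t) ^ a i)
  have entry (t : ℝ) (i j : ι) :
      M t i j = (-1) ^ (a i + a j) * (t ^ (n + a i + a j) * (exp (-t) * t ^ (x - 1))) := by
    simp only [M, w, Matrix.smul_apply, vecMulVec_apply, smul_eq_mul]
    ring
  have hint (i j : ι) : Integrable (fun t => M t i j) (volume.restrict (Ioi 0)) := by
    simp only [entry]
    exact (integrableOn_pow_mul_GammaIntegrand hx _).const_mul _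
  have hM : ∀ᵐ t ∂volume.restrict (Ioi (0 : ℝ)), (M t).PosSemidef := by
    refine ae_restrict_of_forall_mem measurableSet_Ioi fun t ht => ?_
    have hw : 0 ≤ w t := by have : (0 : ℝ) < t := ht; positivity
    simpa using (posSemidef_vecMulVec_self_star fun i => (-t) ^ a i).smul hw
  convert (posSemidef_of_integral hint hM).smul (inv_nonneg.mpr (Gamma_pos_of_pos hx).le)
    using 1
  ext i j
  simp only [entry, integral_const_mul, ← prod_mul_Gamma_eq_integral hx, of_apply,
    Matrix.smul_apply, smul_eq_mul]
  field_simp [(Gamma_pos_of_pos hx).ne']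

theorem cauchy2_det_nonneg_general (m : ℕ) (n : ℕ) (a : Fin m → ℕ) :
    0 ≤ Matrix.det (Matrix.of fun i j : Fin m =>
      (-1 : ℝ) ^ (a i + a j) * cauchy2 (n + a i + a j)) := by
  set P : ℝ → Matrix (Fin m) (Fin m) ℝ :=
    fun x => of fun i j =>
      (-1 : ℝ) ^ (a i + a j) * ∏ k ∈ Finset.range (n + a i + a j), (x + k)
  have hcauchy : (of fun i j : Fin m => (-1 : ℝ) ^ (a i + a j) * cauchy2 (n + a i + a j))
      = of fun i j => ∫ x in Ioc 0 1, P x i j := by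
    ext i j
    simp [P, cauchy2, intervalIntegral.integral_of_le zero_le_one, integral_const_mul]
  have hint (i j : Fin m) : Integrable (fun x => P x i j) (volume.restrict (Ioc 0 1)) :=
    Continuous.integrableOn_Ioc (by fun_prop)
  rw [hcauchy]
  exact (posSemidef_of_integral hint (ae_restrict_of_forall_mem measurableSet_Ioc
    fun x hx => posSemidef_signed_risingFactorial hx.1 n a)).det_nonneg

theorem cauchy2_det_nonneg (m : ℕ) (hm : 1 ≤ m) (n : ℕ) (a : Fin m → ℕ) :
    0 ≤ Matrix.det (Matrix.of fun i j : Fin m =>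
      (-1 : ℝ) ^ (a i + a j) * cauchy2 (n + a i + a j)) :=
  cauchy2_det_nonneg_general m n a
end

section
/- The sequence of Cauchy numbers of the second kind {c_n}_{n≥0} is logarithmically convex: c_{n+1}² ≤ c_n c_{n+2} for all n ≥ 0. -/
/-! With `P n x = ∏ i < n, (x + i)`, for `x ≥ 0` we have
`P (n+1) x ^ 2 = P n x ^ 2 (x + n)^2 ≤ P n x ^ 2 (x + n)(x + n + 1) = P n x * P (n+2) x`.
Integrating this pointwise bound over `[0, 1]` with the Cauchy–Schwarz inequality, in the form
"`h² ≤ f g` pointwise implies `(∫ h)² ≤ ∫ f * ∫ g`", gives the log-convexity. That form is proved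
by the discriminant argument: `t² f - 2 t h + g ≥ 0` pointwise for every `t`, hence after
integration. -/

open MeasureTheory Real Nat

open Finset

lemma quadratic_nonneg_of_sq_le_mul {a b c : ℝ} (ha : 0 ≤ a) (hc : 0 ≤ c) (hb : b ^ 2 ≤ a * c)
    (t : ℝ) : 0 ≤ a * (t * t) + -2 * b * t + c := by
  rcases ha.eq_or_lt with rfl | ha
  · have hb : b = 0 := by nlinarith [sq_nonneg b]
    simpa [hb] using hc
  · have key : 0 ≤ a * (a * (t * t) + -2 * b * t + c) := by nlinarith [sq_nonneg (a * t - b)]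
    exact (mul_nonneg_iff_of_pos_left ha).1 key

theorem sq_integral_le_integral_mul_integral_of_sq_le_mul {α : Type*} [MeasurableSpace α]
    {μ : Measure α} {f g h : α → ℝ} (hf : Integrable f μ) (hg : Integrable g μ)
    (hh : Integrable h μ) (hf₀ : 0 ≤ᵐ[μ] f) (hg₀ : 0 ≤ᵐ[μ] g)
    (hfgh : ∀ᵐ x ∂μ, h x ^ 2 ≤ f x * g x) :
    (∫ x, h x ∂μ) ^ 2 ≤ (∫ x, f x ∂μ) * ∫ x, g x ∂μ := by
  have hquad (t : ℝ) :
      0 ≤ (∫ x, f x ∂μ) * (t * t) + -2 * (∫ x, h x ∂μ) * t + ∫ x, g x ∂μ := by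
    have hlin : ∫ x, (f x * (t * t) + -2 * h x * t + g x) ∂μ
        = (∫ x, f x ∂μ) * (t * t) + -2 * (∫ x, h x ∂μ) * t + ∫ x, g x ∂μ := by
      rw [integral_add (by fun_prop) hg, integral_add (by fun_prop) (by fun_prop),
        integral_mul_const, integral_mul_const, integral_const_mul]
    rw [← hlin]
    refine integral_nonneg_of_ae ?_
    filter_upwards [hf₀, hg₀, hfgh] with x hfx hgx hx
    exact quadratic_nonneg_of_sq_le_mul hfx hgx hx t
  have hdisc := discrim_le_zero hquad
  rw [discrim] at hdisc
  linarith

lemma sq_prod_range_succ_le {R : Type*} [CommSemiring R] [PartialOrder R] [IsOrderedRing R]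
    {x : R} (hx : 0 ≤ x) (n : ℕ) :
    (∏ i ∈ range (n + 1), (x + i)) ^ 2
      ≤ (∏ i ∈ range n, (x + i)) * ∏ i ∈ range (n + 2), (x + i) := by
  have hP : 0 ≤ ∏ i ∈ range n, (x + i) := prod_nonneg fun i _ => by positivity
  have hx_n : 0 ≤ x + n := by positivity
  calc (∏ i ∈ range (n + 1), (x + i)) ^ 2
      = (∏ i ∈ range n, (x + i)) ^ 2 * ((x + n) * (x + n)) := by
        rw [prod_range_succ]; ring
    _ ≤ (∏ i ∈ range n, (x + i)) ^ 2 * ((x + n) * (x + n + 1)) :=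
        mul_le_mul_of_nonneg_left
          (mul_le_mul_of_nonneg_left (le_add_of_nonneg_right zero_le_one) hx_n) (pow_nonneg hP 2)
    _ = (∏ i ∈ range n, (x + i)) * ∏ i ∈ range (n + 2), (x + i) := by
        rw [prod_range_succ, prod_range_succ]; push_cast; ring

theorem cauchy2_log_convex (n : ℕ) :
    cauchy2 (n + 1) ^ 2 ≤ cauchy2 n * cauchy2 (n + 2) := by
  have hint (k : ℕ) : IntegrableOn (fun x : ℝ => ∏ i ∈ range k, (x + i)) (Set.Ioc 0 1) :=
    (by fun_prop : Continuous fun x : ℝ => ∏ i ∈ range k, (x + i)).integrableOn_Ioc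
  have hnonneg (k : ℕ) :
      0 ≤ᵐ[volume.restrict (Set.Ioc (0 : ℝ) 1)] fun x : ℝ => ∏ i ∈ range k, (x + i) :=
    (ae_restrict_iff' measurableSet_Ioc).2 <| .of_forall fun x hx =>
      prod_nonneg fun i _ => add_nonneg hx.1.le i.cast_nonneg
  simp only [cauchy2, intervalIntegral.integral_of_le zero_le_one]
  exact sq_integral_le_integral_mul_integral_of_sq_le_mul (hint n) (hint (n + 2)) (hint (n + 1))
    (hnonneg n) (hnonneg (n + 2))
    ((ae_restrict_iff' measurableSet_Ioc).2 <| .of_forall fun x hx =>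
      sq_prod_range_succ_le hx.1.le n)
end

section
/- For all integers ℓ ≥ 0 and n > k > 0, (c_{ℓ+k})^n ≤ (c_{ℓ+n})^k (c_ℓ)^{n−k}. -/
/-!
Write `P_m(x) = x(x+1)⋯(x+m-1)`, so that `P_{m+1}(x) = P_m(x)(x+m)`. The Cauchy–Schwarz inequality
for the weight `P_m` on `[0,1]` gives `c_{m+1}² ≤ c_m ∫ P_m(x)(x+m)² ≤ c_m c_{m+2}`: the sequence
`c` is log-convex. The ratios `ρ_m = c_{m+1}/c_m` of a positive log-convex sequence increase, hence
`c_{ℓ+k}/c_ℓ ≤ ρ_{ℓ+k}^k` and `ρ_{ℓ+k}^{n-k} ≤ c_{ℓ+n}/c_{ℓ+k}`, and eliminating `ρ_{ℓ+k}` between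
these two bounds is the inequality.
-/

open MeasureTheory Real Nat

open Finset

theorem sq_integral_mul_le_integral_mul_integral_mul_sq {α : Type*} [MeasurableSpace α]
    {μ : Measure α} {w u : α → ℝ} (hw0 : 0 ≤ᵐ[μ] w) (hw : Integrable w μ)
    (hwu : Integrable (fun x ↦ w x * u x) μ) (hwu2 : Integrable (fun x ↦ w x * u x ^ 2) μ) :
    (∫ x, w x * u x ∂μ) ^ 2 ≤ (∫ x, w x ∂μ) * ∫ x, w x * u x ^ 2 ∂μ := by
  have hquad : ∀ t : ℝ, 0 ≤ (∫ x, w x ∂μ) * (t * t) + (-2 * ∫ x, w x * u x ∂μ) * t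
      + ∫ x, w x * u x ^ 2 ∂μ := fun t ↦ by
    calc (0 : ℝ) ≤ ∫ x, w x * (t - u x) ^ 2 ∂μ :=
          integral_nonneg_of_ae
            (by filter_upwards [hw0] with x hx using mul_nonneg hx (sq_nonneg _))
      _ = ∫ x, w x * (t * t) + (-2 * t) * (w x * u x) + w x * u x ^ 2 ∂μ :=
          integral_congr_ae (ae_of_all _ fun x ↦ by ring)
      _ = _ := by
          have hlin : Integrable (fun x ↦ w x * (t * t) + (-2 * t) * (w x * u x)) μ :=
            (hw.mul_const _).add (hwu.const_mul _)
          rw [integral_add hlin hwu2, integral_add (hw.mul_const _) (hwu.const_mul _),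
            integral_mul_const, integral_const_mul]
          ring
  have hdiscrim := discrim_le_zero hquad
  rw [discrim] at hdiscrim
  linarith

section LogConvex

variable {K : Type*} [Field K] [LinearOrder K] [IsStrictOrderedRing K]

theorem prod_range_pow_le_prod_range_pow_of_monotone {r : ℕ → K} (hr : Monotone r)
    (hr0 : ∀ m, 0 ≤ r m) (l k j : ℕ) :
    (∏ t ∈ range k, r (l + t)) ^ j ≤ (∏ t ∈ range j, r (l + k + t)) ^ k := by
  have hlow : ∏ t ∈ range k, r (l + t) ≤ r (l + k) ^ k :=
    calc ∏ t ∈ range k, r (l + t) ≤ ∏ _t ∈ range k, r (l + k) :=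
          prod_le_prod (fun t _ ↦ hr0 _) fun t ht ↦ hr (by simp at ht; omega)
      _ = r (l + k) ^ k := by simp
  have hhigh : r (l + k) ^ j ≤ ∏ t ∈ range j, r (l + k + t) :=
    calc r (l + k) ^ j = ∏ _t ∈ range j, r (l + k) := by simp
      _ ≤ ∏ t ∈ range j, r (l + k + t) := prod_le_prod (fun t _ ↦ hr0 _) fun t _ ↦ hr (by omega)
  calc (∏ t ∈ range k, r (l + t)) ^ j
      ≤ (r (l + k) ^ k) ^ j := pow_le_pow_left₀ (prod_nonneg fun t _ ↦ hr0 _) hlow j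
    _ = (r (l + k) ^ j) ^ k := by rw [← pow_mul, ← pow_mul, mul_comm]
    _ ≤ (∏ t ∈ range j, r (l + k + t)) ^ k := pow_le_pow_left₀ (pow_nonneg (hr0 _) j) hhigh k

theorem pow_le_pow_mul_pow_of_sq_le_mul {a : ℕ → K} (ha : ∀ m, 0 < a m)
    (hlc : ∀ m, a (m + 1) ^ 2 ≤ a m * a (m + 2)) (l : ℕ) {k n : ℕ} (hkn : k ≤ n) :
    a (l + k) ^ n ≤ a (l + n) ^ k * a l ^ (n - k) := by
  obtain ⟨j, rfl⟩ := Nat.exists_eq_add_of_le hkn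
  set r : ℕ → K := fun m ↦ a (m + 1) / a m
  have hr0 : ∀ m, 0 ≤ r m := fun m ↦ (div_pos (ha _) (ha m)).le
  have hr : Monotone r := monotone_nat_of_le_succ fun m ↦ by
    rw [div_le_div_iff₀ (ha m) (ha (m + 1))]
    nlinarith [hlc m]
  have hprod : ∀ m i, a (m + i) = a m * ∏ t ∈ range i, r (m + t) := fun m i ↦ by
    induction i with
    | zero => simp
    | succ i ih =>
      rw [prod_range_succ, ← mul_assoc, ← ih, ← add_assoc]
      exact (mul_div_cancel₀ _ (ha _).ne').symm
  set X := ∏ t ∈ range k, r (l + t)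
  have hX0 : 0 ≤ X := prod_nonneg fun t _ ↦ hr0 _
  rw [← add_assoc, hprod (l + k), hprod l, Nat.add_sub_cancel_left]
  calc (a l * X) ^ (k + j) = a l ^ (k + j) * X ^ k * X ^ j := by ring
    _ ≤ a l ^ (k + j) * X ^ k * (∏ t ∈ range j, r (l + k + t)) ^ k := by
        gcongr
        · exact mul_nonneg (pow_nonneg (ha l).le _) (pow_nonneg hX0 _)
        · exact prod_range_pow_le_prod_range_pow_of_monotone hr hr0 l k j
    _ = (a l * X * ∏ t ∈ range j, r (l + k + t)) ^ k * a l ^ j := by ring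

end LogConvex

theorem cauchy2_eq_setIntegral (m : ℕ) :
    cauchy2 m = ∫ x in Set.Ioc (0 : ℝ) 1, ∏ i ∈ range m, (x + i) :=
  intervalIntegral.integral_of_le zero_le_one

theorem cauchy2_pos (m : ℕ) : 0 < cauchy2 m :=
  intervalIntegral.intervalIntegral_pos_of_pos_on
    ((by fun_prop : Continuous _).intervalIntegrable 0 1)
    (fun x hx ↦ prod_pos fun i _ ↦ by have := hx.1; positivity) zero_lt_one

theorem cauchy2_sq_le_mul (m : ℕ) : cauchy2 (m + 1) ^ 2 ≤ cauchy2 m * cauchy2 (m + 2) := by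
  have hint : ∀ f : ℝ → ℝ, Continuous f → IntegrableOn f (Set.Ioc (0 : ℝ) 1) :=
    fun f hf ↦ hf.integrableOn_Ioc
  have hw0 : ∀ x ∈ Set.Ioc (0 : ℝ) 1, 0 ≤ ∏ i ∈ range m, (x + i) :=
    fun x hx ↦ prod_nonneg fun i _ ↦ by have := hx.1; positivity
  calc cauchy2 (m + 1) ^ 2
      = (∫ x in Set.Ioc (0 : ℝ) 1, (∏ i ∈ range m, (x + i)) * (x + m)) ^ 2 := by
        simp only [cauchy2_eq_setIntegral, prod_range_succ]
    _ ≤ cauchy2 m * ∫ x in Set.Ioc (0 : ℝ) 1, (∏ i ∈ range m, (x + i)) * (x + m) ^ 2 := by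
        rw [cauchy2_eq_setIntegral]
        exact sq_integral_mul_le_integral_mul_integral_mul_sq (u := fun x ↦ x + m)
          ((ae_restrict_iff' measurableSet_Ioc).2 (ae_of_all _ hw0))
          (hint _ (by fun_prop)) (hint _ (by fun_prop)) (hint _ (by fun_prop))
    _ ≤ cauchy2 m * cauchy2 (m + 2) := by
        gcongr
        · exact (cauchy2_pos m).le
        rw [cauchy2_eq_setIntegral]
        refine setIntegral_mono_on (hint _ (by fun_prop)) (hint _ (by fun_prop))
          measurableSet_Ioc fun x hx ↦ ?_
        have hxm : 0 ≤ x + m := by have := hx.1; positivity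
        rw [prod_range_succ, prod_range_succ, mul_assoc, sq]
        push_cast
        gcongr
        · exact hw0 x hx
        · linarith

theorem cauchy2_power_inequality_general (l n k : ℕ) (hn : k < n) :
    cauchy2 (l + k) ^ n ≤ cauchy2 (l + n) ^ k * cauchy2 l ^ (n - k) :=
  pow_le_pow_mul_pow_of_sq_le_mul cauchy2_pos cauchy2_sq_le_mul l hn.le

theorem cauchy2_power_inequality (l n k : ℕ) (hk : 0 < k) (hn : k < n) :
    cauchy2 (l + k) ^ n ≤ cauchy2 (l + n) ^ k * cauchy2 l ^ (n - k) :=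
  cauchy2_power_inequality_general l n k hn
end

section
/- For positive integers n, m with m ≤ n and every integer ℓ ≥ 0, H ≤ G, where G = c_{ℓ+n+2m}(c_ℓ)² − c_{ℓ+n+m} c_{ℓ+m} c_ℓ − c_{ℓ+n} c_{ℓ+2m} c_ℓ + c_{ℓ+n} (c_{ℓ+m})² and H = c_{ℓ+n+2m}(c_ℓ)² − 2 c_{ℓ+n+m} c_{ℓ+m} c_ℓ + c_{ℓ+n} (c_{ℓ+m})². -/
open MeasureTheory Real Nat

/-! Write `x (x+1) ⋯ (x+a+k-1) = w(x) f(x)` with `w(x) = x ⋯ (x+a-1)` and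
`f(x) = (x+a) ⋯ (x+a+k-1)`, and similarly `g` for `m`. Then `c_{a+k} c_{a+m} ≤ c_a c_{a+k+m}` is
Chebyshev's integral inequality for the weight `w` and the increasing factors `f`, `g` on `[0, 1]`,
followed by the pointwise bound `g(x) ≤ (x+a+k) ⋯ (x+a+k+m-1)`.
For `a = l + m`, `k = n - m` this reads `c_{l+n} c_{l+2m} ≤ c_{l+m} c_{l+n+m}`, which after
multiplication by `c_l ≥ 0` is `H ≤ G`. -/

section Chebyshev

variable {α : Type*} [MeasurableSpace α] {μ : Measure α} [SFinite μ] {s : Set α}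
  {w f g : α → ℝ}

/-- Chebyshev's integral inequality, with a nonnegative weight `w`. -/
theorem integral_mul_integral_le_integral_mul_integral_of_monovaryOn (hfg : MonovaryOn f g s)
    (hs : ∀ᵐ x ∂μ, x ∈ s) (hw : ∀ᵐ x ∂μ, 0 ≤ w x) (hw_int : Integrable w μ)
    (hwf : Integrable (fun x ↦ w x * f x) μ) (hwg : Integrable (fun x ↦ w x * g x) μ)
    (hwfg : Integrable (fun x ↦ w x * (f x * g x)) μ) :
    (∫ x, w x * f x ∂μ) * (∫ x, w x * g x ∂μ) ≤ (∫ x, w x ∂μ) * ∫ x, w x * (f x * g x) ∂μ := by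
  -- `F ≥ 0` pointwise, and its integral over `μ × μ` is twice the difference of the two sides
  set F : α × α → ℝ := fun p ↦ w p.1 * w p.2 * ((f p.1 - f p.2) * (g p.1 - g p.2))
  have hF_eq : F = fun p ↦ w p.1 * (f p.1 * g p.1) * w p.2 - w p.1 * f p.1 * (w p.2 * g p.2)
      - w p.1 * g p.1 * (w p.2 * f p.2) + w p.1 * (w p.2 * (f p.2 * g p.2)) := by
    funext p
    ring
  have h₁ := hwfg.mul_prod hw_int
  have h₂ := hwf.mul_prod hwg
  have h₃ := hwg.mul_prod hwf
  have h₄ := hw_int.mul_prod hwfg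
  have hF_int : Integrable F (μ.prod μ) := by
    rw [hF_eq]
    exact ((h₁.sub h₂).sub h₃).add h₄
  have hF_integral : ∫ p, F p ∂μ.prod μ = 2 * ((∫ x, w x ∂μ) * ∫ x, w x * (f x * g x) ∂μ
      - (∫ x, w x * f x ∂μ) * ∫ x, w x * g x ∂μ) := by
    rw [hF_eq, integral_add ?_ h₄, integral_sub ?_ h₃, integral_sub h₁ h₂,
      integral_prod_mul (fun x ↦ w x * (f x * g x)) w,
      integral_prod_mul (fun x ↦ w x * f x) (fun x ↦ w x * g x),
      integral_prod_mul (fun x ↦ w x * g x) (fun x ↦ w x * f x),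
      integral_prod_mul w (fun x ↦ w x * (f x * g x))]
    · ring
    · exact h₁.sub h₂
    · exact (h₁.sub h₂).sub h₃
  have hF_nonneg : 0 ≤ ∫ p, F p ∂μ.prod μ := by
    rw [integral_prod F hF_int]
    refine integral_nonneg_of_ae ?_
    filter_upwards [hs, hw] with x hx hwx
    refine integral_nonneg_of_ae ?_
    filter_upwards [hs, hw] with y hy hwy
    exact mul_nonneg (mul_nonneg hwx hwy) (hfg.sub_mul_sub_nonneg hy hx)
  linarith

end Chebyshev

noncomputable def rising (k : ℕ) (x : ℝ) : ℝ :=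
  ∏ i ∈ Finset.range k, (x + i)

theorem rising_add (a k : ℕ) (x : ℝ) : rising (a + k) x = rising a x * rising k (x + a) := by
  simp only [rising, Finset.prod_range_add, Nat.cast_add, add_assoc]

@[fun_prop]
theorem continuous_rising (k : ℕ) : Continuous (rising k) :=
  continuous_finsetProd _ fun _ _ ↦ by fun_prop

theorem rising_nonneg (k : ℕ) {x : ℝ} (hx : 0 ≤ x) : 0 ≤ rising k x :=
  Finset.prod_nonneg fun _ _ ↦ by positivity

theorem monotoneOn_rising (k : ℕ) : MonotoneOn (rising k) (Set.Ici 0) := by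
  intro x hx y _ hxy
  have hx₀ : 0 ≤ x := hx
  exact Finset.prod_le_prod (fun _ _ ↦ by positivity) fun _ _ ↦ by linarith

theorem cauchy2_eq_setIntegral_s16 (n : ℕ) : cauchy2 n = ∫ x in Set.Ioc 0 1, rising n x :=
  intervalIntegral.integral_of_le zero_le_one

theorem cauchy2_nonneg (n : ℕ) : 0 ≤ cauchy2 n :=
  intervalIntegral.integral_nonneg zero_le_one fun _ hx ↦ rising_nonneg n hx.1

theorem cauchy2_add_mul_cauchy2_add_le (a k m : ℕ) :
    cauchy2 (a + k) * cauchy2 (a + m) ≤ cauchy2 a * cauchy2 (a + k + m) := by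
  have hmem_Ici {x : ℝ} (hx : 0 ≤ x) (b : ℕ) : x + b ∈ Set.Ici 0 :=
    add_nonneg hx b.cast_nonneg
  have hmono (j : ℕ) : MonotoneOn (fun x : ℝ ↦ rising j (x + a)) (Set.Ioc 0 1) :=
    fun x hx y hy hxy ↦ monotoneOn_rising j (hmem_Ici hx.1.le a) (hmem_Ici hy.1.le a)
      (by linarith)
  have hchebyshev := integral_mul_integral_le_integral_mul_integral_of_monovaryOn
    (μ := volume.restrict (Set.Ioc 0 1)) ((hmono k).monovaryOn (hmono m))
    (ae_restrict_mem measurableSet_Ioc)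
    ((ae_restrict_iff' measurableSet_Ioc).2 (.of_forall fun x hx ↦ rising_nonneg a hx.1.le))
    (continuous_rising a).integrableOn_Ioc (by fun_prop : Continuous _).integrableOn_Ioc
    (by fun_prop : Continuous _).integrableOn_Ioc (by fun_prop : Continuous _).integrableOn_Ioc
  have hshift : ∫ x in Set.Ioc 0 1, rising a x * (rising k (x + a) * rising m (x + a))
      ≤ cauchy2 (a + k + m) := by
    rw [cauchy2_eq_setIntegral_s16]
    refine setIntegral_mono_on (by fun_prop : Continuous _).integrableOn_Ioc
      (continuous_rising _).integrableOn_Ioc measurableSet_Ioc fun x hx ↦ ?_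
    have hx₀ : 0 ≤ x := hx.1.le
    rw [rising_add, rising_add, ← mul_assoc]
    refine mul_le_mul_of_nonneg_left (monotoneOn_rising m (hmem_Ici hx₀ a)
      (hmem_Ici hx₀ (a + k)) (by gcongr; omega)) ?_
    exact mul_nonneg (rising_nonneg a hx₀) (rising_nonneg k (hmem_Ici hx₀ a))
  calc cauchy2 (a + k) * cauchy2 (a + m)
      = (∫ x in Set.Ioc 0 1, rising a x * rising k (x + a))
          * ∫ x in Set.Ioc 0 1, rising a x * rising m (x + a) := by
        simp only [cauchy2_eq_setIntegral_s16, rising_add]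
    _ ≤ cauchy2 a * ∫ x in Set.Ioc 0 1, rising a x * (rising k (x + a) * rising m (x + a)) := by
        rw [cauchy2_eq_setIntegral_s16 a]
        exact hchebyshev
    _ ≤ cauchy2 a * cauchy2 (a + k + m) := by
        gcongr
        exact cauchy2_nonneg a

theorem cauchy2_H_le_G_general (n m l : ℕ) (hnm : m ≤ n) :
    cauchy2 (l + n + 2 * m) * cauchy2 l ^ 2
        - 2 * cauchy2 (l + n + m) * cauchy2 (l + m) * cauchy2 l
        + cauchy2 (l + n) * cauchy2 (l + m) ^ 2
      ≤ cauchy2 (l + n + 2 * m) * cauchy2 l ^ 2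
        - cauchy2 (l + n + m) * cauchy2 (l + m) * cauchy2 l
        - cauchy2 (l + n) * cauchy2 (l + 2 * m) * cauchy2 l
        + cauchy2 (l + n) * cauchy2 (l + m) ^ 2 := by
  obtain ⟨k, rfl⟩ := Nat.exists_eq_add_of_le hnm
  have key := cauchy2_add_mul_cauchy2_add_le (l + m) k m
  rw [show l + m + k = l + (m + k) by ring, show l + m + m = l + 2 * m by ring] at key
  have key' := mul_le_mul_of_nonneg_right key (cauchy2_nonneg l)
  linarith

theorem cauchy2_H_le_G (n m l : ℕ) (hn : 0 < n) (hm : 0 < m) (hnm : m ≤ n) :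
    cauchy2 (l + n + 2 * m) * cauchy2 l ^ 2
        - 2 * cauchy2 (l + n + m) * cauchy2 (l + m) * cauchy2 l
        + cauchy2 (l + n) * cauchy2 (l + m) ^ 2
      ≤ cauchy2 (l + n + 2 * m) * cauchy2 l ^ 2
        - cauchy2 (l + n + m) * cauchy2 (l + m) * cauchy2 l
        - cauchy2 (l + n) * cauchy2 (l + 2 * m) * cauchy2 l
        + cauchy2 (l + n) * cauchy2 (l + m) ^ 2 :=
  cauchy2_H_le_G_general n m l hnm
end
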